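/- arXiv:1904.06502 — 4 statements merged into one kernel-verified Lean document; each statement's English description precedes it below -/
import Mathlib

section
/- Let 0 < q < ∞, ν ∈ ℕ, and let ρ = (ρ_j)_{j∈ℕ} be a sequence of real numbers with ρ_j > 1 for all j and (ρ_j^{-1})_{j∈ℕ} ∈ ℓ_q(ℕ). Let θ, λ ≥ 0 and p_s(θ,λ) := ∏_j (1+λ s_j)^θ. Then ∑_{s ∈ F_ν} p_s(θ,λ) (ρ^{-s})^{q/ν} < ∞, where ρ^{-s} := ∏_j ρ_j^{-s_j} and F_ν := {s ∈ F : each s_j ∈ {0} ∪ {ν, ν+1, ν+2, ...}}. -/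
/- STATEMENT 1: Lemma 6.2 of the paper.  `F_ν` is the subtype of finitely
supported multi-indices whose nonzero entries are all ≥ ν, and
`ρ^{-s} = ∏_j ρ_j^{-s_j}`, `p_s(θ,λ) = ∏_j (1+λ s_j)^θ`. -/

open Real Finset
set_option maxHeartbeats 1000000

/-- Summability of polynomially-weighted geometric series. -/
lemma polygeo (θ lam : ℝ) (hθ : 0 ≤ θ) (hlam : 0 ≤ lam) {r : ℝ}
    (hr0 : 0 < r) (hr1 : r < 1) :
    Summable fun n : ℕ => (1 + lam * n) ^ θ * r ^ n := by
  set K := ⌈θ⌉₊ with hK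
  have hg : Summable fun n : ℕ => (n : ℝ) ^ K * r ^ n :=
    summable_pow_mul_geometric_of_norm_lt_one K
      (by rw [Real.norm_eq_abs, abs_of_pos hr0]; exact hr1)
  have hg1 : Summable fun n : ℕ => ((n + 1 : ℕ) : ℝ) ^ K * r ^ (n + 1) :=
    (summable_nat_add_iff 1).2 hg
  have hg2 : Summable fun n : ℕ =>
      (1 + lam) ^ θ * (r⁻¹ * (((n + 1 : ℕ) : ℝ) ^ K * r ^ (n + 1))) :=
    ((hg1.mul_left _).mul_left _)
  refine hg2.of_nonneg_of_le (fun n => by positivity) (fun n => ?_)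
  have hb : (0:ℝ) ≤ 1 + lam * n := by positivity
  have h1 : (1 + lam * n : ℝ) ≤ (1 + lam) * ((n : ℝ) + 1) := by
    have hn : (0:ℝ) ≤ (n:ℝ) := Nat.cast_nonneg n
    have : (1 + lam) * ((n : ℝ) + 1) = 1 + lam * n + ((n:ℝ) + lam) := by ring
    linarith
  have h2 : (1 + lam * n) ^ θ ≤ ((1 + lam) * ((n : ℝ) + 1)) ^ θ :=
    Real.rpow_le_rpow hb h1 hθ
  have h3 : ((1 + lam) * ((n : ℝ) + 1)) ^ θ = (1 + lam) ^ θ * ((n : ℝ) + 1) ^ θ :=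
    Real.mul_rpow (by positivity) (by positivity)
  have h4 : ((n : ℝ) + 1) ^ θ ≤ ((n : ℝ) + 1) ^ (K : ℝ) :=
    Real.rpow_le_rpow_of_exponent_le (by simp) (Nat.le_ceil θ)
  have h5 : ((n : ℝ) + 1) ^ (K : ℝ) = ((n : ℝ) + 1) ^ K := Real.rpow_natCast _ K
  have hrn : (0:ℝ) < r ^ n := pow_pos hr0 n
  have key : (1 + lam * n) ^ θ ≤ (1 + lam) ^ θ * ((n : ℝ) + 1) ^ K := by
    calc (1 + lam * n) ^ θ ≤ ((1 + lam) * ((n : ℝ) + 1)) ^ θ := h2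
    _ = (1 + lam) ^ θ * ((n : ℝ) + 1) ^ θ := h3
    _ ≤ (1 + lam) ^ θ * ((n : ℝ) + 1) ^ K := by
        rw [← h5]; exact mul_le_mul_of_nonneg_left h4 (by positivity)
  have heq : (1 + lam) ^ θ * (r⁻¹ * (((n + 1 : ℕ) : ℝ) ^ K * r ^ (n + 1)))
      = (1 + lam) ^ θ * (((n:ℝ) + 1) ^ K * r ^ n) := by
    push_cast
    field_simp
    ring
  rw [heq]
  calc (1 + lam * n) ^ θ * r ^ n ≤ ((1 + lam) ^ θ * ((n : ℝ) + 1) ^ K) * r ^ n :=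
        mul_le_mul_of_nonneg_right key hrn.le
    _ = (1 + lam) ^ θ * (((n:ℝ) + 1) ^ K * r ^ n) := by ring

/-- A finite sum of a nonneg function over indices `≥ ν` is at most the shifted tsum. -/
lemma sum_le_tsum_shift {ν : ℕ} {f : ℕ → ℝ} (hf : ∀ k, 0 ≤ f k)
    (hsum : Summable fun k => f (k + ν)) {W : Finset ℕ} (hW : ∀ k ∈ W, ν ≤ k) :
    ∑ k ∈ W, f k ≤ ∑' k, f (k + ν) := by
  have hinj : ∀ x ∈ W, ∀ y ∈ W, x - ν = y - ν → x = y := by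
    intro x hx y hy h
    have := hW x hx
    have := hW y hy
    omega
  have h1 : ∑ m ∈ W.image (· - ν), f (m + ν) = ∑ k ∈ W, f (k - ν + ν) :=
    Finset.sum_image hinj
  have h2 : ∑ k ∈ W, f (k - ν + ν) = ∑ k ∈ W, f k := by
    apply Finset.sum_congr rfl
    intro k hk
    congr 1
    have := hW k hk
    omega
  rw [← h2, ← h1]
  exact Summable.sum_le_tsum _ (fun m _ => hf _) hsum

noncomputable def pcoef (θ lam : ℝ) (s : ℕ →₀ ℕ) : ℝ :=
  s.prod fun _ n => (1 + lam * n) ^ θ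

theorem stmt1 (q : ℝ) (hq : 0 < q) (ν : ℕ) (hν : 0 < ν)
    (ρ : ℕ → ℝ) (hρ : ∀ j, 1 < ρ j)
    (hsum : Summable fun j => (ρ j)⁻¹ ^ q)
    (θ lam : ℝ) (hθ : 0 ≤ θ) (hlam : 0 ≤ lam) :
    Summable fun s : {s : ℕ →₀ ℕ // ∀ j, s j = 0 ∨ ν ≤ s j} =>
      pcoef θ lam s.1 * (s.1.prod fun j n => (ρ j)⁻¹ ^ n) ^ (q / ν) := by
  classical
  have hν' : (0:ℝ) < (ν:ℝ) := by exact_mod_cast hν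
  have hqν : 0 < q / (ν:ℝ) := div_pos hq hν'
  have hρpos : ∀ j, 0 < (ρ j)⁻¹ := fun j => inv_pos.2 (lt_trans one_pos (hρ j))
  have hρlt : ∀ j, (ρ j)⁻¹ < 1 := fun j => inv_lt_one_of_one_lt₀ (hρ j)
  set t : ℕ → ℝ := fun j => ((ρ j)⁻¹) ^ (q / (ν:ℝ)) with ht
  have ht0 : ∀ j, 0 < t j := fun j => Real.rpow_pos_of_pos (hρpos j) _
  have ht1 : ∀ j, t j < 1 := fun j => Real.rpow_lt_one (hρpos j).le (hρlt j) hqν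
  set f : ℕ → ℕ → ℝ := fun j n => (1 + lam * n) ^ θ * t j ^ n with hfdef
  have hf0 : ∀ j, f j 0 = 1 := by
    intro j
    simp [hfdef, Real.one_rpow]
  have hfnn : ∀ j n, 0 ≤ f j n := fun j n =>
    mul_nonneg (Real.rpow_nonneg (by positivity) _) (pow_nonneg (ht0 j).le n)
  have hcol : ∀ j, Summable fun k => f j (k + ν) := fun j =>
    (summable_nat_add_iff ν).2 (polygeo θ lam hθ hlam (ht0 j) (ht1 j))
  set B : ℕ → ℝ := fun j => ∑' k, f j (k + ν) with hBdef
  have hBnn : ∀ j, 0 ≤ B j := fun j => tsum_nonneg (fun k => hfnn j _)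
  -- Summability of B
  have hνR : ((ν:ℝ)) ≠ 0 := ne_of_gt hν'
  have htν : ∀ j, t j ^ ν = (ρ j)⁻¹ ^ q := by
    intro j
    rw [ht]
    rw [← Real.rpow_natCast (((ρ j)⁻¹) ^ (q / (ν:ℝ))) ν, ← Real.rpow_mul (hρpos j).le,
      div_mul_cancel₀ _ hνR]
  have htrepr : ∀ j, t j = ((ρ j)⁻¹ ^ q) ^ ((ν:ℝ)⁻¹) := by
    intro j
    simp only [ht]
    rw [div_eq_mul_inv, Real.rpow_mul (hρpos j).le]
  set τ : ℝ := (2⁻¹ : ℝ) ^ ((ν:ℝ)⁻¹) with hτ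
  have hτ0 : 0 < τ := Real.rpow_pos_of_pos (by norm_num) _
  have hτ1 : τ < 1 := Real.rpow_lt_one (by norm_num) (by norm_num) (by positivity)
  obtain ⟨N₀, hN₀⟩ : ∃ N₀, ∀ j ≥ N₀, (ρ j)⁻¹ ^ q ≤ 2⁻¹ := by
    have := hsum.tendsto_atTop_zero
    have h2 : ∀ᶠ j in Filter.atTop, (ρ j)⁻¹ ^ q ≤ 2⁻¹ :=
      this.eventually (eventually_le_nhds (by norm_num))
    exact Filter.eventually_atTop.1 h2
  have htle : ∀ j ≥ N₀, t j ≤ τ := by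
    intro j hj
    rw [htrepr j, hτ]
    exact Real.rpow_le_rpow (Real.rpow_nonneg (hρpos j).le _) (hN₀ j hj) (by positivity)
  have hMs : Summable fun k : ℕ => (1 + lam * ((k + ν : ℕ) : ℝ)) ^ θ * τ ^ k := by
    have h1 : Summable fun k : ℕ => (1 + lam * ((k + ν : ℕ) : ℝ)) ^ θ * τ ^ (k + ν) :=
      (summable_nat_add_iff ν).2 (polygeo θ lam hθ hlam hτ0 hτ1)
    have h2 := h1.mul_left ((τ ^ ν)⁻¹)
    refine h2.congr (fun k => ?_)
    field_simp [pow_add]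
    ring
  set M : ℝ := ∑' k : ℕ, (1 + lam * ((k + ν : ℕ) : ℝ)) ^ θ * τ ^ k with hM
  have hBsum : Summable B := by
    rw [← summable_nat_add_iff N₀]
    have hmaj : Summable fun j => M * ((ρ (j + N₀))⁻¹ ^ q) :=
      ((summable_nat_add_iff N₀).2 hsum).mul_left M
    refine hmaj.of_nonneg_of_le (fun j => hBnn _) (fun j => ?_)
    have hj : j + N₀ ≥ N₀ := Nat.le_add_left _ _
    have hle1 : ∀ k : ℕ, f (j + N₀) (k + ν)
        ≤ (1 + lam * ((k + ν : ℕ) : ℝ)) ^ θ * τ ^ k * ((ρ (j + N₀))⁻¹ ^ q) := by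
      intro k
      have h1 : t (j + N₀) ^ (k + ν) = t (j + N₀) ^ k * t (j + N₀) ^ ν := pow_add _ _ _
      have h2 : t (j + N₀) ^ k ≤ τ ^ k :=
        pow_le_pow_left₀ (ht0 _).le (htle _ hj) k
      have h3 : t (j + N₀) ^ ν = (ρ (j + N₀))⁻¹ ^ q := htν _
      have h4 : (0:ℝ) ≤ (1 + lam * ((k + ν : ℕ) : ℝ)) ^ θ := Real.rpow_nonneg (by positivity) _
      calc f (j + N₀) (k + ν)
          = (1 + lam * ((k + ν : ℕ) : ℝ)) ^ θ * (t (j + N₀) ^ k * ((ρ (j + N₀))⁻¹ ^ q)) := by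
            rw [hfdef]; simp only []; rw [h1, h3]
        _ ≤ (1 + lam * ((k + ν : ℕ) : ℝ)) ^ θ * (τ ^ k * ((ρ (j + N₀))⁻¹ ^ q)) := by
            apply mul_le_mul_of_nonneg_left _ h4
            exact mul_le_mul_of_nonneg_right h2 (Real.rpow_nonneg (hρpos _).le _)
        _ = (1 + lam * ((k + ν : ℕ) : ℝ)) ^ θ * τ ^ k * ((ρ (j + N₀))⁻¹ ^ q) := by ring
    calc B (j + N₀) ≤ ∑' k : ℕ, (1 + lam * ((k + ν : ℕ) : ℝ)) ^ θ * τ ^ k * ((ρ (j + N₀))⁻¹ ^ q) :=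
          Summable.tsum_le_tsum hle1 (hcol _) (hMs.mul_right _)
      _ = M * ((ρ (j + N₀))⁻¹ ^ q) := by rw [tsum_mul_right, hM]
  set c : ℝ := Real.exp (∑' j, B j) with hc
  -- rewriting terms as finite products
  have hterm : ∀ (s : ℕ →₀ ℕ) (N : ℕ), s.support ⊆ Finset.range N →
      pcoef θ lam s * (s.prod fun j n => (ρ j)⁻¹ ^ n) ^ (q / (ν:ℝ))
        = ∏ j ∈ Finset.range N, f j (s j) := by
    intro s N hs
    have hpow : ∀ j n, (((ρ j)⁻¹ ^ n : ℝ)) ^ (q / (ν:ℝ)) = t j ^ n := by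
      intro j n
      rw [← Real.rpow_natCast ((ρ j)⁻¹) n, ← Real.rpow_mul (hρpos j).le, mul_comm,
        Real.rpow_mul (hρpos j).le, Real.rpow_natCast]
    have h1 : (s.prod fun j n => (ρ j)⁻¹ ^ n) ^ (q / (ν:ℝ))
        = ∏ j ∈ s.support, t j ^ (s j) := by
      rw [Finsupp.prod, ← Real.finset_prod_rpow _ _ (fun j _ => pow_nonneg (hρpos j).le _)]
      exact Finset.prod_congr rfl (fun j _ => hpow j (s j))
    rw [pcoef, h1, Finsupp.prod, ← Finset.prod_mul_distrib]
    exact Finset.prod_subset hs (fun j _ hj => by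
      rw [Finsupp.notMem_support_iff.1 hj]; exact hf0 j)
  -- key partial sum bound
  have key : ∀ T : Finset {s : ℕ →₀ ℕ // ∀ j, s j = 0 ∨ ν ≤ s j},
      ∑ s ∈ T, (pcoef θ lam s.1 * (s.1.prod fun j n => (ρ j)⁻¹ ^ n) ^ (q / (ν:ℝ))) ≤ c := by
    intro T
    set N : ℕ := (T.sup fun s => s.1.support.sup id) + 1 with hN
    have hsupp : ∀ s ∈ T, s.1.support ⊆ Finset.range N := by
      intro s hsT j hj
      simp only [Finset.mem_range, hN]
      have h1 : j ≤ s.1.support.sup id := Finset.le_sup (f := id) hj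
      have h2 : s.1.support.sup id ≤ T.sup fun s => s.1.support.sup id := Finset.le_sup (f := fun s => (s.1).support.sup id) hsT
      omega
    rw [Finset.sum_congr rfl (fun s hs => hterm s.1 N (hsupp s hs))]
    set u : Finset ℕ := Finset.range N with hu
    set V : ℕ → Finset ℕ := fun j => T.image fun s => s.1 j with hV
    set e : {s : ℕ →₀ ℕ // ∀ j, s j = 0 ∨ ν ≤ s j} → (∀ a ∈ u, ℕ) :=
      fun s => fun j _ => s.1 j with he
    have hinj : ∀ s ∈ T, ∀ s' ∈ T, e s = e s' → s = s' := by
      intro s hs s' hs' h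
      apply Subtype.ext
      ext j
      by_cases hj : j ∈ u
      · exact congrFun (congrFun h j) hj
      · have h1 : s.1 j = 0 := by
          by_contra hne
          exact hj (hsupp s hs (Finsupp.mem_support_iff.2 hne))
        have h2 : s'.1 j = 0 := by
          by_contra hne
          exact hj (hsupp s' hs' (Finsupp.mem_support_iff.2 hne))
        rw [h1, h2]
    have step1 : ∑ s ∈ T, ∏ j ∈ u, f j (s.1 j)
        = ∑ p ∈ T.image e, ∏ x ∈ u.attach, f x.1 (p x.1 x.2) := by
      rw [Finset.sum_image hinj]
      refine Finset.sum_congr rfl fun s _ => ?_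
      exact (Finset.prod_attach u fun j => f j (s.1 j)).symm
    have hsubset : T.image e ⊆ u.pi (fun j => V j) := by
      intro p hp
      obtain ⟨s, hsT, rfl⟩ := Finset.mem_image.1 hp
      rw [Finset.mem_pi]
      intro j hj
      exact Finset.mem_image.2 ⟨s, hsT, rfl⟩
    have step2 : ∑ p ∈ T.image e, ∏ x ∈ u.attach, f x.1 (p x.1 x.2)
        ≤ ∑ p ∈ u.pi (fun j => V j), ∏ x ∈ u.attach, f x.1 (p x.1 x.2) :=
      Finset.sum_le_sum_of_subset_of_nonneg hsubset
        (fun p _ _ => Finset.prod_nonneg (fun x _ => hfnn _ _))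
    have step3 : ∑ p ∈ u.pi (fun j => V j), ∏ x ∈ u.attach, f x.1 (p x.1 x.2)
        = ∏ j ∈ u, ∑ k ∈ V j, f j k := (Finset.prod_sum u (fun j => V j) f).symm
    have hVbound : ∀ j ∈ u, ∑ k ∈ V j, f j k ≤ 1 + B j := by
      intro j _
      have hsub : ∑ k ∈ V j, f j k ≤ ∑ k ∈ insert 0 (V j), f j k :=
        Finset.sum_le_sum_of_subset_of_nonneg (Finset.subset_insert _ _)
          (fun k _ _ => hfnn j k)
      have hsplit : ∑ k ∈ insert 0 (V j), f j k
          = f j 0 + ∑ k ∈ (V j).erase 0, f j k := by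
        rw [← Finset.erase_insert_eq_erase,
          Finset.add_sum_erase _ _ (Finset.mem_insert_self 0 (V j))]
      have hge : ∀ k ∈ (V j).erase 0, ν ≤ k := by
        intro k hk
        have hk0 : k ≠ 0 := Finset.ne_of_mem_erase hk
        have hkV : k ∈ V j := Finset.mem_of_mem_erase hk
        obtain ⟨s, _, rfl⟩ := Finset.mem_image.1 hkV
        rcases s.2 j with h | h
        · exact absurd h hk0
        · exact h
      have htail : ∑ k ∈ (V j).erase 0, f j k ≤ B j :=
        sum_le_tsum_shift (hfnn j) (hcol j) hge
      calc ∑ k ∈ V j, f j k ≤ f j 0 + ∑ k ∈ (V j).erase 0, f j k := by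
            rw [← hsplit]; exact hsub
        _ ≤ 1 + B j := by rw [hf0 j]; linarith
    have step4 : ∏ j ∈ u, ∑ k ∈ V j, f j k ≤ ∏ j ∈ u, (1 + B j) :=
      Finset.prod_le_prod (fun j _ => Finset.sum_nonneg (fun k _ => hfnn j k)) hVbound
    have step5 : ∏ j ∈ u, (1 + B j) ≤ c := by
      calc ∏ j ∈ u, (1 + B j) ≤ ∏ j ∈ u, Real.exp (B j) :=
            Finset.prod_le_prod (fun j _ => by have := hBnn j; linarith)
              (fun j _ => by rw [add_comm]; exact Real.add_one_le_exp (B j))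
        _ = Real.exp (∑ j ∈ u, B j) := (Real.exp_sum u B).symm
        _ ≤ c := by
            rw [hc]
            exact Real.exp_le_exp.2 (Summable.sum_le_tsum u (fun j _ => hBnn j) hBsum)
    calc ∑ s ∈ T, ∏ j ∈ u, f j (s.1 j)
        = ∑ p ∈ T.image e, ∏ x ∈ u.attach, f x.1 (p x.1 x.2) := step1
      _ ≤ ∑ p ∈ u.pi (fun j => V j), ∏ x ∈ u.attach, f x.1 (p x.1 x.2) := step2
      _ = ∏ j ∈ u, ∑ k ∈ V j, f j k := step3
      _ ≤ ∏ j ∈ u, (1 + B j) := step4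
      _ ≤ c := step5
  refine summable_of_sum_le (c := c) (fun s => ?_) key
  have h1 : 0 ≤ pcoef θ lam s.1 :=
    Finset.prod_nonneg (fun j _ => Real.rpow_nonneg (by positivity) _)
  have h2 : (0:ℝ) ≤ (s.1.prod fun j n => (ρ j)⁻¹ ^ n) ^ (q / (ν:ℝ)) :=
    Real.rpow_nonneg (Finset.prod_nonneg (fun j _ => pow_nonneg (hρpos j).le _)) _
  exact mul_nonneg h1 h2
end

section
/- Let 0 < q₁ ≤ q₂ < ∞ and α > 1/q₂, and set δ := 1/q₁ − 1/q₂ and q := q₂ α > 1 with conjugate q'. Let (σ_{r;s})_{s∈F}, r = 1,2, be families of numbers > 1 with (σ_{r;s}^{-1}) ∈ ℓ_{q_r}(F). For ξ > 0 define G(ξ) := {(k,s) ∈ ℕ₀ × F : σ_{1;s}^{q₁} ≤ ξ and 2^{α q₁ k} σ_{2;s}^{q₁} ≤ ξ}. Then ∑_{(k,s) ∈ G(ξ)} 2^k ≤ M ξ^{1 + δ/α}, where M := 2 ‖(σ_{2;s}^{-1})‖_{ℓ_{q₂}}^{q₂/q} ‖(σ_{1;s}^{-1})‖_{ℓ_{q₁}}^{q₁/q'}.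 -/
/-!
For fixed `s`, every admissible `k` has `2 ^ k ≤ ξ ^ (1 / (α q₁)) σ₂(s) ^ (-1 / α)`, and distinct
powers of two below a bound `t` sum to at most `2 t`. The `s` that occur satisfy `σ₁(s) ^ q₁ ≤ ξ`,
so there are at most `ξ ∑ σ₁ ^ (-q₁)` of them; Hölder with exponents `q = q₂ α` and `q'` against
the constant `1` then bounds `∑_s σ₂(s) ^ (-1 / α)` by `(∑ σ₂ ^ (-q₂)) ^ (1 / q) (ξ ∑ σ₁ ^ (-q₁)) ^ (1 / q')`.
The powers of `ξ` combine since `1 / (α q₁) + 1 / q' = 1 + δ / α`.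
-/

open Finset

lemma sum_two_pow_le_two_mul {A : Finset ℕ} {t : ℝ} (ht : 0 ≤ t) (h : ∀ k ∈ A, (2 : ℝ) ^ k ≤ t) :
    ∑ k ∈ A, (2 : ℝ) ^ k ≤ 2 * t := by
  rcases A.eq_empty_or_nonempty with rfl | hA
  · simpa using ht
  have hlt : ∑ k ∈ A, (2 : ℝ) ^ k < 2 ^ (A.max' hA + 1) := by
    exact_mod_cast Nat.geomSum_lt le_rfl fun k hk => Nat.lt_succ_of_le (A.le_max' k hk)
  calc ∑ k ∈ A, (2 : ℝ) ^ k ≤ 2 * 2 ^ A.max' hA := by rw [← pow_succ']; exact hlt.le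
    _ ≤ 2 * t := by gcongr; exact h _ (A.max'_mem hA)

lemma sum_two_pow_le_two_mul_sum_image_snd {ι : Type*} [DecidableEq ι] (U : Finset (ℕ × ι))
    {t : ι → ℝ} (ht : ∀ s, 0 ≤ t s) (h : ∀ p ∈ U, (2 : ℝ) ^ p.1 ≤ t p.2) :
    ∑ p ∈ U, (2 : ℝ) ^ p.1 ≤ 2 * ∑ s ∈ U.image Prod.snd, t s := by
  rw [← sum_fiberwise_of_maps_to (g := Prod.snd) fun p hp => mem_image_of_mem _ hp, mul_sum]
  gcongr with s
  have hfst : Set.InjOn Prod.fst (U.filter (·.2 = s) : Set (ℕ × ι)) := fun p hp p' hp' hpp' =>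
    Prod.ext hpp' ((mem_filter.1 hp).2.trans (mem_filter.1 hp').2.symm)
  rw [← sum_image hfst]
  refine sum_two_pow_le_two_mul (ht s) fun k hk => ?_
  obtain ⟨p, hp, rfl⟩ := mem_image.1 hk
  obtain ⟨hpU, rfl⟩ := mem_filter.1 hp
  exact h p hpU

lemma le_rpow_mul_rpow_neg_of_rpow_mul_le {x y ξ a b : ℝ} (hx : 0 ≤ x) (hy : 0 < y)
    (ha : 0 < a) (hb : 0 < b) (h : x ^ (a * b) * y ^ b ≤ ξ) :
    x ≤ ξ ^ (1 / (a * b)) * y ^ (-(1 / a)) := by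
  have hroot : x * y ^ (1 / a) ≤ ξ ^ (1 / (a * b)) := by
    calc x * y ^ (1 / a) = (x ^ (a * b) * y ^ b) ^ (1 / (a * b)) := by
          rw [Real.mul_rpow (by positivity) (by positivity), ← Real.rpow_mul hx,
            ← Real.rpow_mul hy.le]
          field_simp
          simp
      _ ≤ ξ ^ (1 / (a * b)) := by gcongr
  rwa [Real.rpow_neg hy.le, ← div_eq_mul_inv, le_div_iff₀ (by positivity)]

lemma sum_le_tsum_rpow_mul_card_rpow {ι : Type*} (s : Finset ι) {f : ι → ℝ} {p q : ℝ}
    (hpq : p.HolderConjugate q) (hf : ∀ i, 0 ≤ f i) (hfp : Summable fun i => f i ^ p) :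
    ∑ i ∈ s, f i ≤ (∑' i, f i ^ p) ^ (1 / p) * (#s : ℝ) ^ (1 / q) := by
  have hholder := Real.inner_le_Lp_mul_Lq_of_nonneg s hpq (fun i _ => hf i) fun _ _ => zero_le_one
  simp only [mul_one, Real.one_rpow, sum_const, nsmul_eq_mul] at hholder
  refine hholder.trans ?_
  have hp := hpq.pos
  gcongr
  · exact sum_nonneg fun i _ => Real.rpow_nonneg (hf i) p
  · exact hfp.sum_le_tsum s fun i _ => Real.rpow_nonneg (hf i) p

lemma card_le_mul_tsum {ι : Type*} {f : ι → ℝ} (hf : Summable f) (hf₀ : ∀ i, 0 ≤ f i)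
    {ξ : ℝ} (hξ : 0 ≤ ξ) {S : Finset ι} (h : ∀ i ∈ S, 1 ≤ ξ * f i) :
    (#S : ℝ) ≤ ξ * ∑' i, f i :=
  calc (#S : ℝ) = ∑ _i ∈ S, 1 := by simp
    _ ≤ ∑ i ∈ S, ξ * f i := sum_le_sum h
    _ = ξ * ∑ i ∈ S, f i := (mul_sum ..).symm
    _ ≤ ξ * ∑' i, f i := by gcongr; exact hf.sum_le_tsum S fun i _ => hf₀ i

lemma tsum_subtype_le_of_sum_le {α : Type*} {P : α → Prop} {f : α → ℝ} {c : ℝ} (hc : 0 ≤ c)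
    (h : ∀ U : Finset α, (∀ a ∈ U, P a) → ∑ a ∈ U, f a ≤ c) : ∑' a : {a // P a}, f a ≤ c :=
  tsum_le_of_sum_le' hc fun T => by
    simpa using h (T.map (.subtype P)) fun _ ha => by
      obtain ⟨a, -, rfl⟩ := mem_map.1 ha
      exact a.2

lemma sum_two_pow_le_of_forall_rpow_le {ι : Type*} [DecidableEq ι] {q₁ q₂ α q' ξ : ℝ}
    (hq₁ : 0 < q₁) (hα : 0 < α) (hconj : (q₂ * α).HolderConjugate q') (hξ : 0 < ξ)
    {σ₁ σ₂ : ι → ℝ} (hσ₁ : ∀ s, 0 < σ₁ s) (hσ₂ : ∀ s, 0 < σ₂ s)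
    (h₁ : Summable fun s => σ₁ s ^ (-q₁)) (h₂ : Summable fun s => σ₂ s ^ (-q₂))
    (U : Finset (ℕ × ι))
    (hU : ∀ p ∈ U, σ₁ p.2 ^ q₁ ≤ ξ ∧ (2 : ℝ) ^ (α * q₁ * (p.1 : ℝ)) * σ₂ p.2 ^ q₁ ≤ ξ) :
    ∑ p ∈ U, (2 : ℝ) ^ p.1 ≤ 2 * ξ ^ (1 / (α * q₁)) *
      ((∑' s, σ₂ s ^ (-q₂)) ^ (1 / (q₂ * α)) * (ξ * ∑' s, σ₁ s ^ (-q₁)) ^ (1 / q')) := by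
  have hσ₁r s (r : ℝ) : 0 ≤ σ₁ s ^ r := Real.rpow_nonneg (hσ₁ s).le r
  have hσ₂r s (r : ℝ) : 0 ≤ σ₂ s ^ r := Real.rpow_nonneg (hσ₂ s).le r
  have hσ₂_pow s : (σ₂ s ^ (-(1 / α))) ^ (q₂ * α) = σ₂ s ^ (-q₂) := by
    rw [← Real.rpow_mul (hσ₂ s).le]; field_simp
  set S := U.image Prod.snd
  have hS s (hs : s ∈ S) : 1 ≤ ξ * σ₁ s ^ (-q₁) := by
    obtain ⟨p, hp, rfl⟩ := mem_image.1 hs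
    rw [Real.rpow_neg (hσ₁ _).le, ← div_eq_mul_inv, one_le_div (Real.rpow_pos_of_pos (hσ₁ _) _)]
    exact (hU p hp).1
  have hHolder : ∑ s ∈ S, σ₂ s ^ (-(1 / α)) ≤
      (∑' s, σ₂ s ^ (-q₂)) ^ (1 / (q₂ * α)) * (#S : ℝ) ^ (1 / q') := by
    have h₂' : Summable fun s => (σ₂ s ^ (-(1 / α))) ^ (q₂ * α) := by
      simpa only [hσ₂_pow] using h₂
    simpa only [hσ₂_pow] using sum_le_tsum_rpow_mul_card_rpow S hconj (fun s => hσ₂r s _) h₂'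
  have hcard := card_le_mul_tsum h₁ (fun s => hσ₁r s _) hξ.le hS
  have hq' := hconj.symm.pos
  calc ∑ p ∈ U, (2 : ℝ) ^ p.1 ≤ 2 * ∑ s ∈ S, ξ ^ (1 / (α * q₁)) * σ₂ s ^ (-(1 / α)) := by
        refine sum_two_pow_le_two_mul_sum_image_snd U (fun s => mul_nonneg (by positivity)
          (hσ₂r s _)) fun p hp => le_rpow_mul_rpow_neg_of_rpow_mul_le (by positivity) (hσ₂ _) hα hq₁ ?_
        rw [← Real.rpow_natCast, ← Real.rpow_mul zero_le_two, mul_comm (p.1 : ℝ)]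
        exact (hU p hp).2
    _ = 2 * ξ ^ (1 / (α * q₁)) * ∑ s ∈ S, σ₂ s ^ (-(1 / α)) := by rw [← mul_sum, mul_assoc]
    _ ≤ 2 * ξ ^ (1 / (α * q₁)) *
          ((∑' s, σ₂ s ^ (-q₂)) ^ (1 / (q₂ * α)) * (#S : ℝ) ^ (1 / q')) := by gcongr
    _ ≤ _ := by
        gcongr
        exact Real.rpow_nonneg (tsum_nonneg fun s => hσ₂r s _) _

theorem stmt6 (q₁ q₂ α δ q q' ξ : ℝ)
    (hq1 : 0 < q₁) (hq12 : q₁ ≤ q₂) (hα : 1 / q₂ < α)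
    (hδ : δ = 1 / q₁ - 1 / q₂) (hq : q = q₂ * α) (hq1' : 1 < q)
    (hq' : 1 / q' + 1 / q = 1) (hξ : 0 < ξ)
    (σ1 σ2 : (ℕ →₀ ℕ) → ℝ) (hσ1 : ∀ s, 1 < σ1 s) (hσ2 : ∀ s, 1 < σ2 s)
    (h1 : Summable fun s => σ1 s ^ (-q₁))
    (h2 : Summable fun s => σ2 s ^ (-q₂)) :
    (∑' p : {p : ℕ × (ℕ →₀ ℕ) //
        σ1 p.2 ^ q₁ ≤ ξ ∧ (2 : ℝ) ^ (α * q₁ * (p.1 : ℝ)) * σ2 p.2 ^ q₁ ≤ ξ},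
        (2 : ℝ) ^ p.1.1) ≤
      (2 * (∑' s : ℕ →₀ ℕ, σ2 s ^ (-q₂)) ^ (1 / q) *
        (∑' s : ℕ →₀ ℕ, σ1 s ^ (-q₁)) ^ (1 / q')) * ξ ^ (1 + δ / α) := by
  classical
  have hq₂ : 0 < q₂ := hq1.trans_le hq12
  have hα₀ : 0 < α := (one_div_pos.2 hq₂).trans hα
  have hσ1₀ s : 0 < σ1 s := one_pos.trans (hσ1 s)
  have hσ2₀ s : 0 < σ2 s := one_pos.trans (hσ2 s)
  have hA1 : 0 ≤ ∑' s, σ1 s ^ (-q₁) := tsum_nonneg fun s => Real.rpow_nonneg (hσ1₀ s).le _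
  have hA2 : 0 ≤ ∑' s, σ2 s ^ (-q₂) := tsum_nonneg fun s => Real.rpow_nonneg (hσ2₀ s).le _
  have hconj : q.HolderConjugate q' :=
    Real.holderConjugate_iff.2 ⟨hq1', by simpa only [one_div, add_comm] using hq'⟩
  have hexp : ξ ^ (1 / (α * q₁)) * ξ ^ (1 / q') = ξ ^ (1 + δ / α) := by
    rw [← Real.rpow_add hξ, show 1 / q' = 1 - 1 / q by linarith, hq, hδ]
    congr 1
    field_simp
    ring
  subst hq
  refine tsum_subtype_le_of_sum_le (f := fun p : ℕ × (ℕ →₀ ℕ) => (2 : ℝ) ^ p.1) ?_ fun U hU => ?_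
  · positivity
  refine (sum_two_pow_le_of_forall_rpow_le hq1 hα₀ hconj hξ hσ1₀ hσ2₀ h1 h2 U hU).trans_eq ?_
  rw [Real.mul_rpow hξ.le hA1, ← hexp]
  ring
end

section
/- Let X be a Hilbert space, 0 < q₁ < 2, and let v = ∑_{s∈F} v_s H_s ∈ L_2(ℝ^∞, X, γ) with ∑_{s∈F} (σ_{1;s} ‖v_s‖_X)² < ∞ for a family (σ_{1;s}) of numbers > 1 satisfying (σ_{1;s}^{-1}) ∈ ℓ_{q₁}(F). For ξ > 0 let v_ξ := ∑_{σ_{1;s}^{q₁} ≤ ξ} v_s H_s. Then ‖v − v_ξ‖_{L_2(ℝ^∞, X, γ)} ≤ C ξ^{-(1/q₁ − 1/2)}, where C depends only on the two summability quantities and not on ξ. -/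
/- STATEMENT 7: the tail estimate `‖v − v_ξ‖_{L₂(ℝ^∞,X,γ)} ≤ C ξ^{-(1/q₁-1/2)}`
(from the proof of Lemma 3.5 of the paper), expressed through Parseval's
identity: `‖v − v_ξ‖²_{L₂(ℝ^∞,X,γ)} = ∑_{σ_{1;s}^{q₁} > ξ} ‖v_s‖²_X`, where
`v_s` are the Hermite coefficients of `v` and `v_ξ = ∑_{σ_{1;s}^{q₁} ≤ ξ} v_s H_s`.
The constant `C` is independent of `ξ`. -/

theorem stmt7 {X : Type*} [NormedAddCommGroup X] [InnerProductSpace ℝ X]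
    (q₁ : ℝ) (hq1 : 0 < q₁) (hq2 : q₁ < 2)
    (σ1 : (ℕ →₀ ℕ) → ℝ) (hσ1 : ∀ s, 1 < σ1 s)
    (v : (ℕ →₀ ℕ) → X)
    (h2 : Summable fun s => (σ1 s * ‖v s‖) ^ 2)
    (hq : Summable fun s => σ1 s ^ (-q₁)) :
    ∃ C > 0, ∀ ξ > 0,
      (∑' s : {s : ℕ →₀ ℕ // ξ < σ1 s ^ q₁}, ‖v s.1‖ ^ 2) ≤
        (C * ξ ^ (-(1 / q₁ - 1 / 2))) ^ 2 := by
  set A := ∑' s, (σ1 s * ‖v s‖) ^ 2 with hAdef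
  have hA0 : 0 ≤ A := tsum_nonneg fun s => sq_nonneg _
  refine ⟨Real.sqrt A + 1, by positivity, fun ξ hξ => ?_⟩
  set C := Real.sqrt A + 1 with hCdef
  have hC0 : 0 < C := by positivity
  have hAC : A ≤ C ^ 2 := by
    have := Real.sq_sqrt hA0
    nlinarith [Real.sqrt_nonneg A]
  -- summability on the subtype
  have hsub : Summable fun s : {s : ℕ →₀ ℕ // ξ < σ1 s ^ q₁} =>
      (σ1 s.1 * ‖v s.1‖) ^ 2 := h2.subtype _
  have hsubA : (∑' s : {s : ℕ →₀ ℕ // ξ < σ1 s ^ q₁}, (σ1 s.1 * ‖v s.1‖) ^ 2) ≤ A := by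
    refine Summable.tsum_le_tsum_of_inj Subtype.val Subtype.val_injective
      (fun c _ => sq_nonneg _) (fun b => le_refl _) hsub h2
  have hterm : ∀ s : ℕ →₀ ℕ, ‖v s‖ ^ 2 ≤ (σ1 s * ‖v s‖) ^ 2 := by
    intro s
    have h1 := hσ1 s
    have h6 : (1:ℝ) ≤ (σ1 s) ^ 2 := by nlinarith
    calc ‖v s‖ ^ 2 = 1 * ‖v s‖ ^ 2 := (one_mul _).symm
      _ ≤ (σ1 s) ^ 2 * ‖v s‖ ^ 2 := mul_le_mul_of_nonneg_right h6 (sq_nonneg _)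
      _ = (σ1 s * ‖v s‖) ^ 2 := by ring
  have hvsub : Summable fun s : {s : ℕ →₀ ℕ // ξ < σ1 s ^ q₁} => ‖v s.1‖ ^ 2 :=
    Summable.of_nonneg_of_le (fun s => sq_nonneg _) (fun s => hterm s.1) hsub
  have hsq : ∀ a : ℝ, (ξ ^ a) ^ 2 = ξ ^ (a * 2) := by
    intro a
    rw [← Real.rpow_natCast (ξ ^ a) 2, ← Real.rpow_mul hξ.le]
    norm_num
  set e : ℝ := -(1 / q₁ - 1 / 2) with hedef
  have hrhs : (C * ξ ^ e) ^ 2 = C ^ 2 * ξ ^ (e * 2) := by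
    rw [mul_pow, hsq]
  rcases le_or_gt ξ 1 with hξ1 | hξ1
  · -- small ξ: tail ≤ A ≤ C² ≤ C² ξ^{2e}
    have h1 : 1 ≤ ξ ^ (e * 2) := by
      apply Real.one_le_rpow_of_pos_of_le_one_of_nonpos hξ hξ1
      have : 1 / 2 < 1 / q₁ := by
        apply one_div_lt_one_div_of_lt hq1 hq2
      rw [hedef]; nlinarith
    have h2' : (∑' s : {s : ℕ →₀ ℕ // ξ < σ1 s ^ q₁}, ‖v s.1‖ ^ 2) ≤ A :=
      le_trans (Summable.tsum_le_tsum (fun s => hterm s.1) hvsub hsub) hsubA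
    rw [hrhs]
    nlinarith [sq_nonneg C]
  · -- large ξ
    have hξ0 : (0:ℝ) < ξ := hξ
    have hbound : ∀ s : {s : ℕ →₀ ℕ // ξ < σ1 s ^ q₁},
        ‖v s.1‖ ^ 2 ≤ (σ1 s.1 * ‖v s.1‖) ^ 2 * ξ ^ ((-(1/q₁)) * 2) := by
      intro ⟨s, hs⟩
      have hσpos : (0:ℝ) < σ1 s := lt_trans one_pos (hσ1 s)
      have h1 : ξ ^ (1/q₁) < σ1 s := by
        have h := Real.rpow_lt_rpow hξ0.le hs (by positivity : (0:ℝ) < 1/q₁)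
        rwa [← Real.rpow_mul hσpos.le, mul_one_div, div_self hq1.ne', Real.rpow_one] at h
      have h2 : (0:ℝ) < ξ ^ (1/q₁) := Real.rpow_pos_of_pos hξ0 _
      have h3 : ξ ^ ((-(1/q₁)) * 2) = ((ξ ^ (1/q₁))⁻¹) ^ 2 := by
        rw [← Real.rpow_neg hξ0.le, ← Real.rpow_natCast (ξ ^ (-(1/q₁))) 2,
          ← Real.rpow_mul hξ0.le]
        norm_num
      rw [h3]
      have h5 : (0:ℝ) ≤ (ξ ^ (1/q₁))⁻¹ := by positivity
      have h4 : (1:ℝ) ≤ (ξ ^ (1/q₁))⁻¹ * σ1 s :=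
        calc (1:ℝ) = (ξ ^ (1/q₁))⁻¹ * ξ ^ (1/q₁) := (inv_mul_cancel₀ h2.ne').symm
          _ ≤ (ξ ^ (1/q₁))⁻¹ * σ1 s := mul_le_mul_of_nonneg_left h1.le h5
      have h6 : (1:ℝ) ≤ ((ξ ^ (1/q₁))⁻¹ * σ1 s) ^ 2 := by nlinarith
      calc ‖v s‖ ^ 2 = 1 * ‖v s‖ ^ 2 := (one_mul _).symm
        _ ≤ ((ξ ^ (1/q₁))⁻¹ * σ1 s) ^ 2 * ‖v s‖ ^ 2 :=
            mul_le_mul_of_nonneg_right h6 (sq_nonneg _)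
        _ = (σ1 s * ‖v s‖) ^ 2 * ((ξ ^ (1/q₁))⁻¹) ^ 2 := by ring
    have hsum2 : Summable fun s : {s : ℕ →₀ ℕ // ξ < σ1 s ^ q₁} =>
        (σ1 s.1 * ‖v s.1‖) ^ 2 * ξ ^ ((-(1/q₁)) * 2) := hsub.mul_right _
    have step1 : (∑' s : {s : ℕ →₀ ℕ // ξ < σ1 s ^ q₁}, ‖v s.1‖ ^ 2)
        ≤ (∑' s : {s : ℕ →₀ ℕ // ξ < σ1 s ^ q₁}, (σ1 s.1 * ‖v s.1‖) ^ 2)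
          * ξ ^ ((-(1/q₁)) * 2) := by
      rw [← tsum_mul_right]
      exact Summable.tsum_le_tsum hbound hvsub hsum2
    have hxp : (0:ℝ) < ξ ^ ((-(1/q₁)) * 2) := Real.rpow_pos_of_pos hξ0 _
    have step2 : (∑' s : {s : ℕ →₀ ℕ // ξ < σ1 s ^ q₁}, (σ1 s.1 * ‖v s.1‖) ^ 2)
        * ξ ^ ((-(1/q₁)) * 2) ≤ A * ξ ^ ((-(1/q₁)) * 2) :=
      mul_le_mul_of_nonneg_right hsubA hxp.le
    have step3 : A * ξ ^ ((-(1/q₁)) * 2) ≤ C ^ 2 * ξ ^ (e * 2) := by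
      have hexp : ξ ^ ((-(1/q₁)) * 2) ≤ ξ ^ (e * 2) := by
        apply Real.rpow_le_rpow_of_exponent_le hξ1.le
        rw [hedef]; nlinarith [hξ1]
      calc A * ξ ^ ((-(1/q₁)) * 2) ≤ C ^ 2 * ξ ^ ((-(1/q₁)) * 2) :=
            mul_le_mul_of_nonneg_right hAC hxp.le
        _ ≤ C ^ 2 * ξ ^ (e * 2) :=
            mul_le_mul_of_nonneg_left hexp (by positivity)
    rw [hrhs]
    exact le_trans step1 (le_trans step2 step3)
end

section
/- For each multi-index s ∈ F, the interpolation grid Γ_s := {y_{s−e;m} : e ∈ E_s, 0 ≤ m_j ≤ s_j − e_j} satisfies |Γ_s| ≤ ∏_{j∈ℕ} (2 s_j + 1) = p_s(1,2). Consequently, if Λ(ξ) := {s ∈ F : σ_s^q ≤ ξ} for a family (σ_s) with M := ∑_{s∈F} p_s(1,2) σ_s^{-q} < ∞, then the total number of interpolation points satisfies |Γ(Λ(ξ))| ≤ ∑_{s∈Λ(ξ)} p_s(1,2) ≤ M ξ. -/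
/-- The interpolation grid `Γ_s` associated with a multi-index `s`. -/
def gridOfIndex (Y : ℕ → ℕ → ℝ) (s : ℕ →₀ ℕ) : Set (ℕ → ℝ) :=
  {z | ∃ e m : ℕ → ℕ, (∀ j, e j ≤ 1) ∧ (∀ j, s j = 0 → e j = 0) ∧
    (∀ j, m j ≤ s j - e j) ∧ z = fun j => Y (s j - e j) (m j)}

/-!
Every point of `Γ_s` has its `j`-th coordinate in `Y_{s_j} ∪ Y_{s_j - 1}`, a set of at most
`2 s_j + 1` reals, and equal to `y_{0;0}` off the support of `s`; so `|Γ_s|` is at most the number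
of choices on the support, `∏_j (2 s_j + 1) = p_s(1,2)`. Summing over `Λ(ξ)` bounds `|Γ(Λ(ξ))|`,
and since `σ_s^{-q} ≥ ξ⁻¹` on `Λ(ξ)`, a Markov-type bound gives `∑_{s ∈ Λ(ξ)} p_s(1,2) ≤ M ξ`; the same
inequality together with the summability of `M` makes `Λ(ξ)` finite.
-/

open Finset

section Counting

variable {ι β : Type*}

theorem Set.ncard_le_prod_card_of_forall_mem [DecidableEq ι] {G : Set (ι → β)} (S : Finset ι)
    (F : ι → Finset β) (hF : ∀ j ∉ S, (F j).card ≤ 1) (hG : ∀ z ∈ G, ∀ j, z j ∈ F j) :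
    G.ncard ≤ ∏ j ∈ S, (F j).card := by
  calc G.ncard ≤ ((Fintype.piFinset fun j : S => F j : Finset (S → β)) : Set (S → β)).ncard := by
        refine Set.ncard_le_ncard_of_injOn (fun z j => z j)
          (fun z hz => by simpa using fun j _ => hG z hz j) ?_
        intro z hz z' hz' hzz'
        funext j
        by_cases hj : j ∈ S
        · exact congrFun hzz' ⟨j, hj⟩
        · exact Finset.card_le_one.mp (hF j hj) _ (hG z hz j) _ (hG z' hz' j)
    _ = ∏ j ∈ S, (F j).card := by
        rw [Set.ncard_coe_finset, Fintype.card_piFinset]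
        exact prod_coe_sort S fun j => (F j).card

theorem Set.Finite.ncard_biUnion_le_tsum {t : Set ι} (ht : t.Finite) (G : ι → Set β)
    (b : ι → ℝ) (hb : ∀ i, ((G i).ncard : ℝ) ≤ b i) :
    ((⋃ i ∈ t, G i).ncard : ℝ) ≤ ∑' i : t, b i := by
  have := ht.fintype
  rw [Set.biUnion_eq_iUnion, tsum_fintype]
  calc ((⋃ i : t, G i).ncard : ℝ) ≤ ((∑ i : t, (G i).ncard : ℕ) : ℝ) :=
        Nat.cast_le.mpr (Set.ncard_iUnion_le_of_fintype _)
    _ ≤ ∑ i : t, b i := by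
        push_cast
        exact sum_le_sum fun i _ => hb i

end Counting

section Markov

variable {α : Type*}

theorem Summable.finite_setOf_le {f : α → ℝ} (hf : Summable f) {c : ℝ} (hc : 0 < c) :
    {a | c ≤ f a}.Finite := by
  simpa using Filter.eventually_cofinite.mp (hf.tendsto_cofinite_zero.eventually (gt_mem_nhds hc))

theorem mul_tsum_subtype_le_tsum_mul (P : α → Prop) {p w : α → ℝ} {c : ℝ} (hc : 0 < c)
    (hp : ∀ a, 0 ≤ p a) (hw : ∀ a, 0 ≤ w a) (hP : ∀ a, P a → c ≤ w a)
    (hpw : Summable fun a => p a * w a) :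
    c * ∑' a : {a // P a}, p a ≤ ∑' a, p a * w a := by
  have hle : ∀ a : {a // P a}, c * p a ≤ p a * w a := fun a => by
    rw [mul_comm]; exact mul_le_mul_of_nonneg_left (hP a a.2) (hp a)
  rw [← tsum_mul_left]
  calc ∑' a : {a // P a}, c * p a ≤ ∑' a : {a // P a}, p a * w a :=
        Summable.tsum_le_tsum hle
          (Summable.of_nonneg_of_le (fun a => mul_nonneg hc.le (hp a)) hle (hpw.subtype P))
          (hpw.subtype P)
    _ ≤ ∑' a, p a * w a :=
        Summable.tsum_subtype_le (fun a => p a * w a) {a | P a}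
          (fun a => mul_nonneg (hp a) (hw a)) hpw

end Markov

section Grid

noncomputable def gridFactor (Y : ℕ → ℕ → ℝ) (n : ℕ) : Finset ℝ :=
  (range (n + 1)).image (Y n) ∪ (range n).image (Y (n - 1))

variable (Y : ℕ → ℕ → ℝ)

theorem card_gridFactor_le (n : ℕ) : (gridFactor Y n).card ≤ 2 * n + 1 := by
  calc (gridFactor Y n).card ≤ (range (n + 1)).card + (range n).card :=
        (card_union_le _ _).trans (add_le_add card_image_le card_image_le)
    _ = 2 * n + 1 := by simp only [card_range]; ring

theorem mem_gridFactor {n e m : ℕ} (he : e ≤ 1) (hn : n = 0 → e = 0) (hm : m ≤ n - e) :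
    Y (n - e) m ∈ gridFactor Y n := by
  obtain rfl | rfl : e = 0 ∨ e = 1 := by omega
  · exact mem_union_left _ (mem_image_of_mem _ (mem_range.mpr (by omega)))
  · exact mem_union_right _ (mem_image_of_mem _ (mem_range.mpr (by omega)))

theorem ncard_gridOfIndex_le (s : ℕ →₀ ℕ) :
    (gridOfIndex Y s).ncard ≤ ∏ j ∈ s.support, (2 * s j + 1) := by
  calc (gridOfIndex Y s).ncard ≤ ∏ j ∈ s.support, (gridFactor Y (s j)).card := by
        refine Set.ncard_le_prod_card_of_forall_mem _ _ (fun j hj => ?_) ?_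
        · simpa [Finsupp.notMem_support_iff.mp hj] using card_gridFactor_le Y 0
        · rintro _ ⟨e, m, he, hs, hm, rfl⟩ j
          exact mem_gridFactor Y (he j) (hs j) (hm j)
    _ ≤ ∏ j ∈ s.support, (2 * s j + 1) := prod_le_prod' fun j _ => card_gridFactor_le Y (s j)

theorem pcoef_one_two (s : ℕ →₀ ℕ) :
    pcoef 1 2 s = ((∏ j ∈ s.support, (2 * s j + 1) : ℕ) : ℝ) := by
  rw [pcoef, Finsupp.prod, Nat.cast_prod]
  exact prod_congr rfl fun j _ => by push_cast; rw [Real.rpow_one]; ring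

theorem one_le_pcoef_one_two (s : ℕ →₀ ℕ) : 1 ≤ pcoef 1 2 s := by
  rw [pcoef_one_two, Nat.one_le_cast]
  exact prod_pos fun j _ => Nat.succ_pos _

theorem ncard_gridOfIndex_le_pcoef (s : ℕ →₀ ℕ) : ((gridOfIndex Y s).ncard : ℝ) ≤ pcoef 1 2 s := by
  rw [pcoef_one_two]
  exact Nat.cast_le.mpr (ncard_gridOfIndex_le Y s)

end Grid

theorem stmt14_general (Y : ℕ → ℕ → ℝ) (q ξ : ℝ) (hξ : 0 < ξ)
    (σ : (ℕ →₀ ℕ) → ℝ) (hσ : ∀ s, 0 < σ s)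
    (hM : Summable fun s => pcoef 1 2 s * σ s ^ (-q)) :
    (∀ s : ℕ →₀ ℕ, ((gridOfIndex Y s).ncard : ℝ) ≤ pcoef 1 2 s) ∧
    ((⋃ s ∈ {s : ℕ →₀ ℕ | σ s ^ q ≤ ξ}, gridOfIndex Y s).ncard : ℝ) ≤
      (∑' s : {s : ℕ →₀ ℕ // σ s ^ q ≤ ξ}, pcoef 1 2 s.1) ∧
    (∑' s : {s : ℕ →₀ ℕ // σ s ^ q ≤ ξ}, pcoef 1 2 s.1) ≤
      (∑' s : ℕ →₀ ℕ, pcoef 1 2 s * σ s ^ (-q)) * ξ := by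
  have hw : ∀ s, σ s ^ q ≤ ξ → ξ⁻¹ ≤ σ s ^ (-q) := fun s hs => by
    rw [Real.rpow_neg (hσ s).le]
    exact inv_anti₀ (Real.rpow_pos_of_pos (hσ s) q) hs
  have hΛ : {s | σ s ^ q ≤ ξ}.Finite :=
    (hM.finite_setOf_le (inv_pos.mpr hξ)).subset fun s hs =>
      (hw s hs).trans (le_mul_of_one_le_left (Real.rpow_nonneg (hσ s).le _) (one_le_pcoef_one_two s))
  have hMarkov := mul_tsum_subtype_le_tsum_mul (fun s => σ s ^ q ≤ ξ) (inv_pos.mpr hξ)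
    (fun s => zero_le_one.trans (one_le_pcoef_one_two s)) (fun s => Real.rpow_nonneg (hσ s).le _)
    hw hM
  refine ⟨ncard_gridOfIndex_le_pcoef Y, hΛ.ncard_biUnion_le_tsum _ _ (ncard_gridOfIndex_le_pcoef Y), ?_⟩
  rw [mul_comm]
  exact (inv_mul_le_iff₀ hξ).mp hMarkov

theorem stmt14 (Y : ℕ → ℕ → ℝ) (q ξ : ℝ) (hq : 0 < q) (hξ : 0 < ξ)
    (σ : (ℕ →₀ ℕ) → ℝ) (hσ : ∀ s, 0 < σ s)
    (hM : Summable fun s => pcoef 1 2 s * σ s ^ (-q)) :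
    (∀ s : ℕ →₀ ℕ, ((gridOfIndex Y s).ncard : ℝ) ≤ pcoef 1 2 s) ∧
    ((⋃ s ∈ {s : ℕ →₀ ℕ | σ s ^ q ≤ ξ}, gridOfIndex Y s).ncard : ℝ) ≤
      (∑' s : {s : ℕ →₀ ℕ // σ s ^ q ≤ ξ}, pcoef 1 2 s.1) ∧
    (∑' s : {s : ℕ →₀ ℕ // σ s ^ q ≤ ξ}, pcoef 1 2 s.1) ≤
      (∑' s : ℕ →₀ ℕ, pcoef 1 2 s * σ s ^ (-q)) * ξ :=
  stmt14_general Y q ξ hξ σ hσ hM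
end
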